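/- arXiv:2407.02588 — 2 statements merged into one kernel-verified Lean document; each statement's English description precedes it below -/
import Mathlib

section
/- In the category FI(n) of [n]-weighted finite sets with weight-non-decreasing injections, there exists a morphism from the object b = (b_1,...,b_n) to the object a = (a_1,...,a_n) (where the i-th coordinate records the number of elements of weight i) if and only if the reversed tuple (b_n,...,b_1) is less than or equal to (a_n,...,a_1) in the dominance order, i.e., b_n + ... + b_{n-i+1} ≤ a_n + ... + a_{n-i+1} for each i = 1,...,n. -/
/-!
Counting elements of weight at least `k` shows the dominance condition is necessary. For
sufficiency, apply Hall's marriage theorem to the relation "weight may not decrease": the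
elements of `a` related to a nonempty family `s` of elements of `b` are exactly those of
weight at least the minimal weight `k` of `s`, and `s` lies among the elements of weight
at least `k`.
-/

open Finset

section WeightedInjection

variable {ι α L : Type*} [Fintype ι] [Fintype α]

theorem card_filter_le_weight_le_of_injective [Preorder L] [DecidableLE L]
    {w : ι → L} {v : α → L} {f : ι → α} (hf : Function.Injective f)
    (hfw : ∀ x, w x ≤ v (f x)) (k : L) :
    #{x | k ≤ w x} ≤ #{y | k ≤ v y} :=
  card_le_card_of_injOn f
    (fun x hx => by
      simp only [coe_filter, mem_univ, true_and] at hx ⊢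
      exact hx.trans (hfw x))
    hf.injOn

theorem exists_injective_weight_le_iff_card_filter_le [LinearOrder L] (w : ι → L) (v : α → L) :
    (∃ f : ι → α, Function.Injective f ∧ ∀ x, w x ≤ v (f x)) ↔
      ∀ k, #{x | k ≤ w x} ≤ #{y | k ≤ v y} := by
  refine ⟨fun ⟨f, hf, hfw⟩ => card_filter_le_weight_le_of_injective hf hfw, fun h => ?_⟩
  refine (Fintype.all_card_le_filter_rel_iff_exists_injective fun x y => w x ≤ v y).mp
    fun s => ?_
  rcases s.eq_empty_or_nonempty with rfl | hs
  · simp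
  have hrel :
      ({y | ∃ x ∈ s, w x ≤ v y} : Finset α) = ({y | s.inf' hs w ≤ v y} : Finset α) := by
    ext y
    simp [inf'_le_iff]
  have hsub : s ⊆ ({x | s.inf' hs w ≤ w x} : Finset ι) := fun x hx =>
    mem_filter.mpr ⟨mem_univ x, inf'_le w hx⟩
  rw [hrel]
  exact (card_le_card hsub).trans (h _)

end WeightedInjection

theorem card_filter_fst_sigma {ι : Type*} [Fintype ι] (c : ι → ℕ) (p : ι → Prop)
    [DecidablePred p] :
    #{x : Σ i, Fin (c i) | p x.1} = ∑ i with p i, c i := by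
  rw [card_filter, ← univ_sigma_univ, sum_sigma, sum_filter]
  congr 1 with i
  split_ifs <;> simp

/-- An object `a` of `FI(n)` is modeled as `Σ i : Fin n, Fin (a i)`, where an element
`⟨i, _⟩` has weight `i + 1`. -/
theorem fiN_morphism_exists_iff_dominance_general (n : ℕ) (a b : Fin n → ℕ) :
    (∃ φ : (Σ i : Fin n, Fin (b i)) → (Σ i : Fin n, Fin (a i)),
        Function.Injective φ ∧ ∀ x, x.1 ≤ (φ x).1) ↔
      ∀ k : Fin n,
        ∑ i ∈ Finset.univ.filter (fun i : Fin n => k ≤ i), b i ≤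
          ∑ i ∈ Finset.univ.filter (fun i : Fin n => k ≤ i), a i := by
  simp only [← card_filter_fst_sigma]
  exact exists_injective_weight_le_iff_card_filter_le Sigma.fst Sigma.fst

/-- In `FI(n)`, there is a morphism (a weight-non-decreasing injection) from the object
`b = (b_1,…,b_n)` to `a = (a_1,…,a_n)` iff the reversed tuples satisfy the dominance order.
An object `a` is modeled as `Σ i : Fin n, Fin (a i)`, where an element `⟨i, _⟩` has weight
`i + 1`. -/
theorem fiN_morphism_exists_iff_dominance (n : ℕ) (hn : 1 ≤ n) (a b : Fin n → ℕ) :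
    (∃ φ : (Σ i : Fin n, Fin (b i)) → (Σ i : Fin n, Fin (a i)),
        Function.Injective φ ∧ ∀ x, x.1 ≤ (φ x).1) ↔
      ∀ k : Fin n,
        ∑ i ∈ Finset.univ.filter (fun i : Fin n => k ≤ i), b i ≤
          ∑ i ∈ Finset.univ.filter (fun i : Fin n => k ≤ i), a i :=
  fiN_morphism_exists_iff_dominance_general n a b
end

section
/- In the category C_d (objects: [n]-weighted finite sets; morphisms: weight-non-decreasing injections φ: S → T that are surjective onto the set of elements of T of weight < d), for every object a there are only finitely many isomorphism classes of objects b admitting a morphism b → a. In particular C_d is inwards finite. -/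
/-- The category `C_d` is inwards finite: for every object `a` there are only finitely many
isomorphism classes of objects `b` admitting a morphism `b → a`.  Objects are modeled by
tuples `b : Fin n → ℕ` (the underlying weighted set being `Σ i : Fin n, Fin (b i)`, where
`⟨i, _⟩` has weight `i + 1`); a morphism `b → a` is a weight-non-decreasing injection that
is surjective onto the elements of `a` of weight `≤ d - 1`. -/
theorem Cd_inwards_finite (n d : ℕ) (hd1 : 1 ≤ d) (hdn : d ≤ n) (a : Fin n → ℕ) :
    {b : Fin n → ℕ |
      ∃ φ : (Σ i : Fin n, Fin (b i)) → (Σ i : Fin n, Fin (a i)),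
        Function.Injective φ ∧ (∀ x, x.1 ≤ (φ x).1) ∧
          ∀ y : (Σ i : Fin n, Fin (a i)), (y.1 : ℕ) + 1 < d → ∃ x, φ x = y}.Finite := by
  set N := ∑ i, a i with hN
  apply Set.Finite.subset (Set.Finite.pi (fun _ : Fin n => Set.finite_Iic N))
  rintro b ⟨φ, hinj, -, -⟩ i -
  have hcard : Fintype.card (Σ i : Fin n, Fin (b i)) ≤
      Fintype.card (Σ i : Fin n, Fin (a i)) := Fintype.card_le_of_injective φ hinj
  simp only [Fintype.card_sigma, Fintype.card_fin] at hcard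
  calc b i ≤ ∑ j, b j := Finset.single_le_sum (fun j _ => Nat.zero_le _) (Finset.mem_univ i)
    _ ≤ N := hcard
end
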